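/- Let A be an associative algebra with a symmetric associative bilinear form ⟨·,·⟩ and decomposition A = A⁺ ⊕ A⁻ into isotropic subalgebras, writing v = v₊ + v₋ for the projections. Then for all u, v, w ∈ A: ⟨u, v₊w₋⟩ + ⟨v, w₊u₋⟩ + ⟨w, u₊v₋⟩ = ⟨u, v₋w₊⟩ + ⟨v, w₋u₊⟩ + ⟨w, u₋v₊⟩. -/

import Mathlib

/-! For a symmetric invariant form the triple product `⟨x, yz⟩` is invariant under cyclic
permutations of `x, y, z`. Splitting `u = u₊ + u₋`, `v = v₊ + v₋`, `w = w₊ + w₋`, each of the six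
triple products on the left-hand side is a cyclic permutation of one of the six on the right. -/

namespace LinearMap.BilinForm

variable {R A : Type*} [CommSemiring R] [NonUnitalNonAssocSemiring A] [Module R A]
  (B : LinearMap.BilinForm R A)

theorem apply_mul_cyclic (hsymm : ∀ u v : A, B u v = B v u)
    (hassoc : ∀ u v w : A, B (u * v) w = B u (v * w)) (x y z : A) :
    B x (y * z) = B y (z * x) := by
  rw [hsymm, hassoc]

theorem add_cyclic_sum_eq (hsymm : ∀ u v : A, B u v = B v u)
    (hassoc : ∀ u v w : A, B (u * v) w = B u (v * w)) (a a' b b' c c' : A) :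
    B (a + a') (b * c') + B (b + b') (c * a') + B (c + c') (a * b')
      = B (a + a') (b' * c) + B (b + b') (c' * a) + B (c + c') (a' * b) := by
  have cyc := apply_mul_cyclic B hsymm hassoc
  simp only [map_add, LinearMap.add_apply]
  rw [cyc a b c', ← cyc c' a' b, cyc b c a', ← cyc a' b' c, cyc c a b', ← cyc b' c' a]
  abel

end LinearMap.BilinForm

theorem polarized_triple_product_symmetric_general
    {F : Type*} [Field F] {A : Type*} [Ring A] [Algebra F A]
    (B : LinearMap.BilinForm F A)
    (hsymm : ∀ u v : A, B u v = B v u)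
    (hassoc : ∀ u v w : A, B (u * v) w = B u (v * w))
    (pp pm : A → A)
    (hdecomp : ∀ v : A, pp v + pm v = v) :
    ∀ u v w : A,
      B u (pp v * pm w) + B v (pp w * pm u) + B w (pp u * pm v)
        = B u (pm v * pp w) + B v (pm w * pp u) + B w (pm u * pp v) := by
  intro u v w
  simpa only [hdecomp] using
    B.add_cyclic_sum_eq hsymm hassoc (pp u) (pm u) (pp v) (pm v) (pp w) (pm w)

/-- Lemma 4.2, equality of the two cyclic expressions:
`⟨u, v₊w₋⟩ + ⟨v, w₊u₋⟩ + ⟨w, u₊v₋⟩ = ⟨u, v₋w₊⟩ + ⟨v, w₋u₊⟩ + ⟨w, u₋v₊⟩`. -/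
theorem polarized_triple_product_symmetric
    {F : Type*} [Field F] {A : Type*} [Ring A] [Algebra F A]
    (B : LinearMap.BilinForm F A)
    (hsymm : ∀ u v : A, B u v = B v u)
    (hassoc : ∀ u v w : A, B (u * v) w = B u (v * w))
    (P N : Submodule F A)
    (hPmul : ∀ a ∈ P, ∀ b ∈ P, a * b ∈ P)
    (hNmul : ∀ a ∈ N, ∀ b ∈ N, a * b ∈ N)
    (hPiso : ∀ a ∈ P, ∀ b ∈ P, B a b = 0)
    (hNiso : ∀ a ∈ N, ∀ b ∈ N, B a b = 0)
    (hcompl : IsCompl P N)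
    (pp pm : A → A)
    (hpp : ∀ v : A, pp v ∈ P) (hpm : ∀ v : A, pm v ∈ N)
    (hdecomp : ∀ v : A, pp v + pm v = v) :
    ∀ u v w : A,
      B u (pp v * pm w) + B v (pp w * pm u) + B w (pp u * pm v)
        = B u (pm v * pp w) + B v (pm w * pp u) + B w (pm u * pp v) :=
  polarized_triple_product_symmetric_general B hsymm hassoc pp pm hdecomp
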